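/- Let δ > 0, let E ∈ ℝ^{n×n} be invertible, let F ∈ ℝ^{n×n}, let P ∈ ℝ^{n×n} be symmetric positive definite, and set Q := Eᵀ·P·E and A := I_n + δ·E⁻¹·F. Then Q − Aᵀ·Q·A is positive definite if and only if the block matrix [[−Eᵀ·P·F − Fᵀ·P·E, Fᵀ],[F, (1/δ)·P⁻¹]] ∈ ℝ^{2n×2n} is positive definite. -/

import Mathlib

/-!
Since `E * A = E + δ • F`, expanding gives
`Q - Aᵀ Q A = δ • (-(Eᵀ P F) - Fᵀ P E - Fᵀ (δ • P) F)`, and the matrix in brackets is the Schur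
complement of the positive definite block `(1 / δ) • P⁻¹` in the block matrix. A Hermitian block
matrix with positive definite lower-right block is positive definite iff that Schur complement is:
positive semidefiniteness transfers by the semidefinite Schur lemma, and invertibility by the
determinant formula `det = det D * det (A - B D⁻¹ Bᴴ)`.
-/

open Matrix ComplexOrder

namespace Matrix

variable {m n 𝕜 : Type*} [RCLike 𝕜]

theorem posDef_smul_iff {M : Matrix n n 𝕜} {c : ℝ} (hc : 0 < c) : (c • M).PosDef ↔ M.PosDef :=
  ⟨fun h => by simpa [smul_smul, inv_mul_cancel₀ hc.ne'] using h.smul (inv_pos.mpr hc),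
    fun h => h.smul hc⟩

theorem posDef_fromBlocks₂₂_iff [Fintype m] [Fintype n] [DecidableEq m] [DecidableEq n]
    (A : Matrix m m 𝕜) (B : Matrix m n 𝕜) {D : Matrix n n 𝕜} (hD : D.PosDef) :
    (fromBlocks A B Bᴴ D).PosDef ↔ (A - B * D⁻¹ * Bᴴ).PosDef := by
  have := hD.isUnit.invertible
  have hdet : (fromBlocks A B Bᴴ D).det = D.det * (A - B * D⁻¹ * Bᴴ).det := by
    rw [det_fromBlocks₂₂, invOf_eq_nonsing_inv]
  constructor
  · intro h
    have hS := (PosDef.fromBlocks₂₂ A B hD).mp h.posSemidef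
    refine hS.posDef_iff_det_ne_zero.mpr fun h0 => ?_
    exact h.posSemidef.posDef_iff_det_ne_zero.mp h (by rw [hdet, h0, mul_zero])
  · intro h
    have hM := (PosDef.fromBlocks₂₂ A B hD).mpr h.posSemidef
    rw [hM.posDef_iff_det_ne_zero, hdet]
    exact mul_ne_zero hD.det_pos.ne' h.det_pos.ne'

section CommRing

variable {R : Type*} [CommRing R] [Fintype n]

theorem mul_one_add_smul_inv_mul [DecidableEq n] {E : Matrix n n R} (hE : IsUnit E) (c : R)
    (F : Matrix n n R) : E * (1 + c • (E⁻¹ * F)) = E + c • F := by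
  rw [Matrix.mul_add, Matrix.mul_one, Matrix.mul_smul,
    mul_nonsing_inv_cancel_left _ _ ((isUnit_iff_isUnit_det E).mp hE)]

theorem sub_transpose_add_smul_mul_mul (E F P : Matrix n n R) (c : R) :
    Eᵀ * P * E - (E + c • F)ᵀ * P * (E + c • F)
      = c • (-(Eᵀ * P * F) - Fᵀ * P * E - Fᵀ * (c • P) * F) := by
  simp only [transpose_add, transpose_smul, Matrix.add_mul, Matrix.mul_add, Matrix.smul_mul,
    Matrix.mul_smul]
  module

end CommRing

end Matrix

theorem stmt_9 {n : ℕ} (δ : ℝ) (hδ : 0 < δ)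
    (E F P : Matrix (Fin n) (Fin n) ℝ) (hE : IsUnit E) (hP : P.PosDef) :
    let Q := Eᵀ * P * E
    let A := (1 : Matrix (Fin n) (Fin n) ℝ) + δ • (E⁻¹ * F)
    (Q - Aᵀ * Q * A).PosDef ↔
      (Matrix.fromBlocks (-(Eᵀ * P * F) - Fᵀ * P * E) Fᵀ F ((1 / δ) • P⁻¹)).PosDef := by
  intro Q A
  have hQA : Aᵀ * Q * A = (E + δ • F)ᵀ * P * (E + δ • F) := by
    rw [← mul_one_add_smul_inv_mul hE δ F]
    simp only [Q, A, transpose_mul, Matrix.mul_assoc]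
  have hD : ((1 / δ) • P⁻¹).PosDef := hP.inv.smul (one_div_pos.mpr hδ)
  have hDinv : ((1 / δ) • P⁻¹)⁻¹ = δ • P := by
    refine inv_eq_left_inv ?_
    rw [smul_mul_smul_comm, mul_one_div_cancel hδ.ne', one_smul,
      mul_nonsing_inv P ((isUnit_iff_isUnit_det P).mp hP.isUnit)]
  have hF : Fᵀᴴ = F := by rw [conjTranspose_eq_transpose_of_trivial, transpose_transpose]
  have hSchur := posDef_fromBlocks₂₂_iff (-(Eᵀ * P * F) - Fᵀ * P * E) Fᵀ hD
  rw [hF, hDinv] at hSchur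
  rw [hSchur, hQA, sub_transpose_add_smul_mul_mul, posDef_smul_iff hδ]
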